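/- Any two Λ-interleavings of the same pair M, N of representations (viewed as representations of Σ_Λ P) are ΛΛ‾-interleaved, where ΛΛ‾ is the untwisted translation of Σ_Λ P induced by Λ∘Λ. -/

import Mathlib

open CategoryTheory

/-- A translation of a proset `P`, bundled. -/
structure Translation (P : Type) [Preorder P] where
  toFun : P → P
  mono : Monotone toFun
  le_self : ∀ x, x ≤ toFun x

variable {P : Type} [Preorder P]

/-- The shoelace `Σ_Λ P`: two copies of `P`. -/
def Shoe (T : Translation P) : Type := P ⊕ P

/-- The left copy of `P` inside `Σ_Λ P`. -/
def Shoe.l {T : Translation P} (i : P) : Shoe T := Sum.inl i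

/-- The right copy of `P` inside `Σ_Λ P` (the "primed" copy). -/
def Shoe.r {T : Translation P} (i : P) : Shoe T := Sum.inr i

/-- The shoelace preorder. -/
instance {T : Translation P} : Preorder (Shoe T) where
  le x y := match x, y with
    | Sum.inl i, Sum.inl j => i ≤ j
    | Sum.inr i, Sum.inr j => i ≤ j
    | Sum.inl i, Sum.inr j => T.toFun i ≤ j
    | Sum.inr i, Sum.inl j => T.toFun i ≤ j
  le_refl x := by cases x <;> exact le_refl _
  le_trans x y z h1 h2 := by
    rcases x with i | i <;> rcases y with j | j <;> rcases z with k | k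
    · exact le_trans h1 h2
    · exact le_trans (T.mono h1) h2
    · exact le_trans (T.le_self i) (le_trans h1 (le_trans (T.le_self j) h2))
    · exact le_trans h1 h2
    · exact le_trans h1 h2
    · exact le_trans (T.le_self i) (le_trans h1 (le_trans (T.le_self j) h2))
    · exact le_trans (T.mono h1) h2
    · exact le_trans h1 h2

lemma Shoe.l_le_l {T : Translation P} {i j : P} (h : i ≤ j) :
    (Shoe.l i : Shoe T) ≤ Shoe.l j := h

lemma Shoe.r_le_r {T : Translation P} {i j : P} (h : i ≤ j) :
    (Shoe.r i : Shoe T) ≤ Shoe.r j := h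

lemma Shoe.l_le_r {T : Translation P} {i j : P} (h : T.toFun i ≤ j) :
    (Shoe.l i : Shoe T) ≤ Shoe.r j := h

lemma Shoe.r_le_l {T : Translation P} {i j : P} (h : T.toFun i ≤ j) :
    (Shoe.r i : Shoe T) ≤ Shoe.l j := h

variable {D : Type*} [Category D]

/-- A `Λ`-interleaving between representations `M, N : Q ⥤ D` of a proset `Q`,
given componentwise. -/
def IsInterleaving {Q : Type*} [Preorder Q] (Λ : Q → Q)
    (hmono : Monotone Λ) (hle : ∀ x, x ≤ Λ x) (M N : Q ⥤ D)
    (φ : ∀ x, M.obj x ⟶ N.obj (Λ x)) (ψ : ∀ x, N.obj x ⟶ M.obj (Λ x)) : Prop :=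
  (∀ x y (h : x ≤ y), M.map (homOfLE h) ≫ φ y = φ x ≫ N.map (homOfLE (hmono h))) ∧
  (∀ x y (h : x ≤ y), N.map (homOfLE h) ≫ ψ y = ψ x ≫ M.map (homOfLE (hmono h))) ∧
  (∀ x, φ x ≫ ψ (Λ x) = M.map (homOfLE ((hle x).trans (hle (Λ x))))) ∧
  (∀ x, ψ x ≫ φ (Λ x) = N.map (homOfLE ((hle x).trans (hle (Λ x)))))

section interRep

variable (T : Translation P) (M N : P ⥤ D)
  (φ : ∀ x, M.obj x ⟶ N.obj (T.toFun x)) (ψ : ∀ x, N.obj x ⟶ M.obj (T.toFun x))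

/-- Auxiliary map data for the shoelace representation of an interleaving. -/
def interMapAux : ∀ (x y : Shoe T), x ≤ y →
    (Sum.elim M.obj N.obj x ⟶ Sum.elim M.obj N.obj y)
  | Sum.inl _, Sum.inl _, h => M.map (homOfLE h)
  | Sum.inr _, Sum.inr _, h => N.map (homOfLE h)
  | Sum.inl i, Sum.inr _, h => φ i ≫ N.map (homOfLE h)
  | Sum.inr i, Sum.inl _, h => ψ i ≫ M.map (homOfLE h)

lemma interMapAux_comp (hint : IsInterleaving T.toFun T.mono T.le_self M N φ ψ)
    (x y z : Shoe T) (h1 : x ≤ y) (h2 : y ≤ z) :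
    interMapAux T M N φ ψ x z (le_trans h1 h2) =
      interMapAux T M N φ ψ x y h1 ≫ interMapAux T M N φ ψ y z h2 := by
  obtain ⟨natφ, natψ, intφψ, intψφ⟩ := hint
  rcases x with i | i <;> rcases y with j | j <;> rcases z with k | k
  · have a : i ≤ j := h1
    have b : j ≤ k := h2
    exact (show M.map (homOfLE (a.trans b)) = M.map (homOfLE a) ≫ M.map (homOfLE b) by
      rw [← M.map_comp, homOfLE_comp])
  · have a : i ≤ j := h1
    have b : T.toFun j ≤ k := h2
    exact (show φ i ≫ N.map (homOfLE ((T.mono a).trans b)) =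
        M.map (homOfLE a) ≫ (φ j ≫ N.map (homOfLE b)) by
      rw [reassoc_of% (natφ i j a)]
      simp only [← Functor.map_comp, homOfLE_comp])
  · have a : T.toFun i ≤ j := h1
    have b : T.toFun j ≤ k := h2
    exact (show M.map (homOfLE ((T.le_self i).trans (a.trans ((T.le_self j).trans b)))) =
        (φ i ≫ N.map (homOfLE a)) ≫ (ψ j ≫ M.map (homOfLE b)) by
      simp only [Category.assoc]
      rw [reassoc_of% (natψ (T.toFun i) j a), reassoc_of% (intφψ i)]
      simp only [← Functor.map_comp, homOfLE_comp])
  · have a : T.toFun i ≤ j := h1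
    have b : j ≤ k := h2
    exact (show φ i ≫ N.map (homOfLE (a.trans b)) =
        (φ i ≫ N.map (homOfLE a)) ≫ N.map (homOfLE b) by
      simp only [Category.assoc, ← Functor.map_comp, homOfLE_comp])
  · have a : T.toFun i ≤ j := h1
    have b : j ≤ k := h2
    exact (show ψ i ≫ M.map (homOfLE (a.trans b)) =
        (ψ i ≫ M.map (homOfLE a)) ≫ M.map (homOfLE b) by
      simp only [Category.assoc, ← Functor.map_comp, homOfLE_comp])
  · have a : T.toFun i ≤ j := h1
    have b : T.toFun j ≤ k := h2
    exact (show N.map (homOfLE ((T.le_self i).trans (a.trans ((T.le_self j).trans b)))) =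
        (ψ i ≫ M.map (homOfLE a)) ≫ (φ j ≫ N.map (homOfLE b)) by
      simp only [Category.assoc]
      rw [reassoc_of% (natφ (T.toFun i) j a), reassoc_of% (intψφ i)]
      simp only [← Functor.map_comp, homOfLE_comp])
  · have a : i ≤ j := h1
    have b : T.toFun j ≤ k := h2
    exact (show ψ i ≫ M.map (homOfLE ((T.mono a).trans b)) =
        N.map (homOfLE a) ≫ (ψ j ≫ M.map (homOfLE b)) by
      rw [reassoc_of% (natψ i j a)]
      simp only [← Functor.map_comp, homOfLE_comp])
  · have a : i ≤ j := h1
    have b : j ≤ k := h2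
    exact (show N.map (homOfLE (a.trans b)) = N.map (homOfLE a) ≫ N.map (homOfLE b) by
      rw [← N.map_comp, homOfLE_comp])

/-- The shoelace representation `V : Σ_Λ P ⥤ D` associated to a `Λ`-interleaving
`(M, N, φ, ψ)`: it is `M` on the left copy, `N` on the right copy, and uses `φ`, `ψ`
to jump across. -/
def interRep (hint : IsInterleaving T.toFun T.mono T.le_self M N φ ψ) :
    Shoe T ⥤ D where
  obj := Sum.elim M.obj N.obj
  map {x y} f := interMapAux T M N φ ψ x y (leOfHom f)
  map_id x := by
    cases x with
    | inl i => exact M.map_id i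
    | inr i => exact N.map_id i
  map_comp {x y z} f g :=
    interMapAux_comp T M N φ ψ hint x y z (leOfHom f) (leOfHom g)

end interRep

/-- The untwisted translation `(ΛΛ)‾` of `Σ_Λ P` induced by `Λ ∘ Λ`:
`i ↦ Λ(Λ(i))` and `i' ↦ (Λ(Λ(i)))'`. -/
def Translation.barSq (T : Translation P) : Translation (Shoe T) where
  toFun x := match x with
    | Sum.inl i => Shoe.l (T.toFun (T.toFun i))
    | Sum.inr i => Shoe.r (T.toFun (T.toFun i))
  mono := by
    rintro (i | i) (j | j) h
    · exact T.mono (T.mono h)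
    · exact T.mono (T.mono h)
    · exact T.mono (T.mono h)
    · exact T.mono (T.mono h)
  le_self := by
    rintro (i | i)
    · exact (T.le_self i).trans (T.le_self (T.toFun i))
    · exact (T.le_self i).trans (T.le_self (T.toFun i))

/-!
Both shoelace representations restrict to `N` on the primed copy of `P`, and every
`x ∈ Σ_Λ P` satisfies `x ≤ (ρ x)' ≤ (ΛΛ)‾ x` for the monotone map `ρ i = Λ i`,
`ρ i' = i`.
So the interleaving maps go up from `x` to `(ρ x)'` in one representation and on to
`(ΛΛ)‾ x` in the other; in the composite of two of them the middle stretch runs between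
two primed indices, where the two representations agree.
-/

section Restriction

variable {Q R : Type*} [Preorder Q] [Preorder R] {V W : Q ⥤ D} {ι : R → Q} {ρ : Q → R}
  {Λ : Q → Q} {e : ∀ r, V.obj (ι r) ≅ W.obj (ι r)}

def IsNaturalAlong (hι : Monotone ι) (e : ∀ r, V.obj (ι r) ≅ W.obj (ι r)) : Prop :=
  ∀ ⦃r s⦄ (h : r ≤ s),
    V.map (homOfLE (hι h)) ≫ (e s).hom = (e r).hom ≫ W.map (homOfLE (hι h))

lemma IsNaturalAlong.symm {hι : Monotone ι} (he : IsNaturalAlong hι e) :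
    IsNaturalAlong hι (fun r ↦ (e r).symm) := by
  intro r s h
  rw [Iso.symm_hom, Iso.symm_hom, Iso.eq_inv_comp, ← reassoc_of% he h, Iso.hom_inv_id,
    Category.comp_id]

variable (e) (hlow : ∀ x, x ≤ ι (ρ x)) (hup : ∀ x, ι (ρ x) ≤ Λ x)

def viaRestriction (x : Q) : V.obj x ⟶ W.obj (Λ x) :=
  V.map (homOfLE (hlow x)) ≫ (e (ρ x)).hom ≫ W.map (homOfLE (hup x))

variable {e}

lemma viaRestriction_naturality {hι : Monotone ι} (he : IsNaturalAlong hι e)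
    (hρ : Monotone ρ) {x y : Q} (hxy : x ≤ y) (hΛ : Λ x ≤ Λ y) :
    V.map (homOfLE hxy) ≫ viaRestriction e hlow hup y =
      viaRestriction e hlow hup x ≫ W.map (homOfLE hΛ) := by
  calc V.map (homOfLE hxy) ≫ viaRestriction e hlow hup y
      = V.map (homOfLE (hlow x)) ≫ (V.map (homOfLE (hι (hρ hxy))) ≫ (e (ρ y)).hom) ≫
          W.map (homOfLE (hup y)) := by
        simp only [viaRestriction, Category.assoc, ← Functor.map_comp_assoc, homOfLE_comp]
    _ = viaRestriction e hlow hup x ≫ W.map (homOfLE hΛ) := by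
        rw [he (hρ hxy)]
        simp only [viaRestriction, Category.assoc, ← Functor.map_comp, homOfLE_comp]

lemma viaRestriction_comp_viaRestriction {hι : Monotone ι} (he : IsNaturalAlong hι e)
    (hρ : Monotone ρ) (x : Q) (hx : x ≤ Λ (Λ x)) :
    viaRestriction e hlow hup x ≫ viaRestriction (fun r ↦ (e r).symm) hlow hup (Λ x) =
      V.map (homOfLE hx) := by
  have hxΛ : ρ x ≤ ρ (Λ x) := hρ ((hlow x).trans (hup x))
  calc viaRestriction e hlow hup x ≫ viaRestriction (fun r ↦ (e r).symm) hlow hup (Λ x)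
      = V.map (homOfLE (hlow x)) ≫ (e (ρ x)).hom ≫ (W.map (homOfLE (hι hxΛ)) ≫
          (e (ρ (Λ x))).symm.hom) ≫ V.map (homOfLE (hup (Λ x))) := by
        simp only [viaRestriction, Category.assoc, ← Functor.map_comp_assoc, homOfLE_comp]
    _ = V.map (homOfLE hx) := by
        rw [he.symm hxΛ, Iso.symm_hom, Category.assoc, Iso.hom_inv_id_assoc]
        simp only [← Functor.map_comp, homOfLE_comp]

theorem isInterleaving_viaRestriction {hι : Monotone ι} (he : IsNaturalAlong hι e)
    (hρ : Monotone ρ) (hΛ : Monotone Λ) (hle : ∀ x, x ≤ Λ x) :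
    IsInterleaving Λ hΛ hle V W (viaRestriction e hlow hup)
      (viaRestriction (fun r ↦ (e r).symm) hlow hup) :=
  ⟨fun _ _ hxy ↦ viaRestriction_naturality hlow hup he hρ hxy (hΛ hxy),
    fun _ _ hxy ↦ viaRestriction_naturality hlow hup he.symm hρ hxy (hΛ hxy),
    fun x ↦ viaRestriction_comp_viaRestriction hlow hup he hρ x _,
    fun x ↦ viaRestriction_comp_viaRestriction hlow hup he.symm hρ x _⟩

end Restriction

namespace Shoe

variable {T : Translation P}

lemma r_monotone : Monotone (r : P → Shoe T) :=
  fun _ _ ↦ r_le_r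

variable (T) in
def toRight : Shoe T → P
  | Sum.inl i => T.toFun i
  | Sum.inr i => i

lemma toRight_monotone : Monotone (toRight T) := by
  rintro (i | i) (j | j) h
  · exact T.mono h
  · exact h
  · have hij : T.toFun i ≤ j := h
    exact (T.le_self i).trans (hij.trans (T.le_self j))
  · exact h

lemma le_r_toRight (x : Shoe T) : x ≤ r (toRight T x) := by
  rcases x with i | i
  · exact l_le_r le_rfl
  · exact r_le_r le_rfl

lemma r_toRight_le_barSq (x : Shoe T) : r (toRight T x) ≤ T.barSq.toFun x := by
  rcases x with i | i
  · exact r_le_l le_rfl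
  · exact r_le_r ((T.le_self i).trans (T.le_self _))

end Shoe

/-- Any two `Λ`-interleavings of the same pair `M, N`, viewed as
representations of `Σ_Λ P`, are `(ΛΛ)‾`-interleaved, where `(ΛΛ)‾` is the untwisted
translation of `Σ_Λ P` induced by `Λ ∘ Λ`. -/
theorem interleavings_are_bar_interleaved (T : Translation P) (M N : P ⥤ D)
    (φ : ∀ x, M.obj x ⟶ N.obj (T.toFun x)) (ψ : ∀ x, N.obj x ⟶ M.obj (T.toFun x))
    (φ' : ∀ x, M.obj x ⟶ N.obj (T.toFun x)) (ψ' : ∀ x, N.obj x ⟶ M.obj (T.toFun x))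
    (h : IsInterleaving T.toFun T.mono T.le_self M N φ ψ)
    (h' : IsInterleaving T.toFun T.mono T.le_self M N φ' ψ') :
    ∃ (Φ : ∀ x : Shoe T, (interRep T M N φ ψ h).obj x ⟶
        (interRep T M N φ' ψ' h').obj ((Translation.barSq T).toFun x))
      (Ψ : ∀ x : Shoe T, (interRep T M N φ' ψ' h').obj x ⟶
        (interRep T M N φ ψ h).obj ((Translation.barSq T).toFun x)),
      IsInterleaving (Translation.barSq T).toFun (Translation.barSq T).mono
        (Translation.barSq T).le_self
        (interRep T M N φ ψ h) (interRep T M N φ' ψ' h') Φ Ψ := by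
  -- both representations map `i' ≤ j'` to `N.map (homOfLE _)` definitionally
  have agree_on_primed : IsNaturalAlong (V := interRep T M N φ ψ h)
      (W := interRep T M N φ' ψ' h') Shoe.r_monotone (fun i ↦ Iso.refl (N.obj i)) :=
    fun _ _ _ ↦ (Category.comp_id _).trans (Category.id_comp _).symm
  exact ⟨_, _, isInterleaving_viaRestriction Shoe.le_r_toRight Shoe.r_toRight_le_barSq
    agree_on_primed Shoe.toRight_monotone _ _⟩
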